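/- Let n be odd and f, g ∈ ℤ[x]. If 2 divides the integer D = ∏_{j=0}^{n-1} (f(ω^j)f(ω^{-j}) - g(ω^j)g(ω^{-j})), where ω = e^{2πi/n}, then 4 divides D. -/

import Mathlib

/-!
Write `n = 2k + 1` and `Q_j = Q(ω^j)`. Since `Q_{n-j} = Q_j`, the determinant factors as
`D = c · m²` with `c = f(1)² - g(1)² = (f(1) - g(1))(f(1) + g(1))` and `m = Q_1 ⋯ Q_k`, an algebraic
integer. Modulo `2`, squaring is a ring endomorphism fixing the integer coefficients of `f` and `g`,
so `m² ≡ Q_2 Q_4 ⋯ Q_{2k} = m`, because `j ↦ ±2j` permutes `{1, …, k}` modulo `n`.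
If `c` is even, then `4 ∣ c`; otherwise `2 ∣ D` forces `2 ∣ m² ≡ m`, hence `4 ∣ m²`.
An integer divisible by `4` among the algebraic integers is divisible by `4` in `ℤ`.
-/

open Polynomial Finset

section DihedralFactor

variable {R S : Type*} [CommRing R] [CommRing S]

noncomputable def dihedralFactor (f g : ℤ[X]) (x y : R) : R :=
  aeval x f * aeval y f - aeval x g * aeval y g

theorem dihedralFactor_comm (f g : ℤ[X]) (x y : R) :
    dihedralFactor f g x y = dihedralFactor f g y x := by
  unfold dihedralFactor; ring

theorem map_dihedralFactor (φ : R →+* S) (f g : ℤ[X]) (x y : R) :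
    φ (dihedralFactor f g x y) = dihedralFactor f g (φ x) (φ y) := by
  simp only [dihedralFactor, map_sub, map_mul, ← RingHom.toIntAlgHom_coe φ, aeval_algHom_apply]

theorem dihedralFactor_one_one (f g : ℤ[X]) :
    dihedralFactor f g (1 : R) 1 = ((f.eval 1 ^ 2 - g.eval 1 ^ 2 : ℤ) : R) := by
  simp [dihedralFactor, aeval_def, eval₂_at_one]; ring

end DihedralFactor

section SymmetricProducts

variable {M : Type*} [CommMonoid M] {k : ℕ} {t : ℕ → M}

theorem prod_range_two_mul_add_one_of_symm (ht : ∀ j ≤ 2 * k + 1, t (2 * k + 1 - j) = t j) :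
    ∏ j ∈ range (2 * k + 1), t j = t 0 * (∏ j ∈ Icc 1 k, t j) ^ 2 := by
  have hupper : ∏ j ∈ Icc (k + 1) (2 * k), t j = ∏ j ∈ Icc 1 k, t j := by
    refine prod_nbij' (2 * k + 1 - ·) (2 * k + 1 - ·) ?_ ?_ ?_ ?_ ?_ <;>
      intro j hj <;> simp only [mem_Icc] at hj ⊢
    all_goals first | omega | exact (ht j (by omega)).symm
  rw [range_eq_Ico, prod_eq_prod_Ico_succ_bot (by omega),
    ← prod_Ico_consecutive _ (show 1 ≤ k + 1 by omega) (show k + 1 ≤ 2 * k + 1 by omega),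
    Ico_add_one_right_eq_Icc, Ico_add_one_right_eq_Icc, hupper, sq]

theorem prod_Icc_two_mul_of_symm (ht : ∀ j ≤ 2 * k + 1, t (2 * k + 1 - j) = t j) :
    ∏ j ∈ Icc 1 k, t (2 * j) = ∏ j ∈ Icc 1 k, t j := by
  refine prod_nbij' (fun j ↦ if 2 * j ≤ k then 2 * j else 2 * k + 1 - 2 * j)
    (fun j ↦ if Even j then j / 2 else (2 * k + 1 - j) / 2) ?_ ?_ ?_ ?_ ?_ <;>
    intro j hj <;> simp only [mem_Icc, Nat.even_iff] at hj ⊢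
  all_goals split_ifs <;> first | omega | rfl | exact (ht _ (by omega)).symm

end SymmetricProducts

section HalfProduct

variable {R S : Type*} [CommRing R] [CommRing S] (f g : ℤ[X]) {ζ : R} {k : ℕ}

-- When `ζ ^ (2 * k + 1) = 1`, the power `ζ ^ (2 * k + 1 - j)` stands for `ζ⁻¹ ^ j`.
noncomputable def dihedralHalfProd (ζ : R) (k : ℕ) : R :=
  ∏ j ∈ Icc 1 k, dihedralFactor f g (ζ ^ j) (ζ ^ (2 * k + 1 - j))

theorem map_dihedralHalfProd (φ : R →+* S) (ζ : R) (k : ℕ) :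
    φ (dihedralHalfProd f g ζ k) = dihedralHalfProd f g (φ ζ) k := by
  simp only [dihedralHalfProd, map_prod, map_dihedralFactor, map_pow]

theorem prod_range_dihedralFactor (hζ : ζ ^ (2 * k + 1) = 1) :
    ∏ j ∈ range (2 * k + 1), dihedralFactor f g (ζ ^ j) (ζ ^ (2 * k + 1 - j)) =
      ((f.eval 1 ^ 2 - g.eval 1 ^ 2 : ℤ) : R) * dihedralHalfProd f g ζ k ^ 2 := by
  rw [prod_range_two_mul_add_one_of_symm, pow_zero, Nat.sub_zero, hζ, dihedralFactor_one_one]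
  · rfl
  intro j hj
  rw [Nat.sub_sub_self hj, dihedralFactor_comm]

theorem dihedralHalfProd_sq_of_charTwo [CharP R 2] (hζ : ζ ^ (2 * k + 1) = 1) :
    dihedralHalfProd f g ζ k ^ 2 = dihedralHalfProd f g ζ k := by
  have hfrob : dihedralHalfProd f g ζ k ^ 2 =
      ∏ j ∈ Icc 1 k, dihedralFactor f g (ζ ^ (2 * j)) (ζ ^ (2 * k + 1 - 2 * j)) := by
    rw [← frobenius_def (p := 2), map_dihedralHalfProd, frobenius_def, dihedralHalfProd]
    refine prod_congr rfl fun j hj ↦ ?_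
    have hj : j ≤ k := (mem_Icc.mp hj).2
    have hexp : 2 * (2 * k + 1 - j) = (2 * k + 1 - 2 * j) + (2 * k + 1) := by omega
    rw [← pow_mul, ← pow_mul, hexp, pow_add, hζ, mul_one]
  rw [hfrob, dihedralHalfProd, prod_Icc_two_mul_of_symm (t := fun j ↦
    dihedralFactor f g (ζ ^ j) (ζ ^ (2 * k + 1 - j)))]
  intro j hj
  simp only [Nat.sub_sub_self hj, dihedralFactor_comm]

theorem two_dvd_dihedralHalfProd_sq_sub (hζ : ζ ^ (2 * k + 1) = 1) :
    (2 : R) ∣ dihedralHalfProd f g ζ k ^ 2 - dihedralHalfProd f g ζ k := by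
  let π := Ideal.Quotient.mk (Ideal.span {(2 : R)})
  rw [← Ideal.mem_span_singleton, ← Ideal.Quotient.eq_zero_iff_mem, map_sub, map_pow,
    map_dihedralHalfProd, sub_eq_zero]
  rcases subsingleton_or_nontrivial (R ⧸ Ideal.span {(2 : R)}) with hS | hS
  · exact Subsingleton.elim _ _
  have : CharP (R ⧸ Ideal.span {(2 : R)}) 2 := CharTwo.of_one_ne_zero_of_two_eq_zero one_ne_zero
    (by rw [← map_ofNat π 2, Ideal.Quotient.eq_zero_iff_mem]; exact Ideal.mem_span_singleton_self 2)
  exact dihedralHalfProd_sq_of_charTwo f g (by rw [← map_pow, hζ, map_one])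

end HalfProduct

theorem Int.four_dvd_sq_sub_sq {a b : ℤ} (h : 2 ∣ a ^ 2 - b ^ 2) : 4 ∣ a ^ 2 - b ^ 2 := by
  have hfac : a ^ 2 - b ^ 2 = (a - b) * (a + b) := by ring
  have hpar : 2 ∣ a - b ↔ 2 ∣ a + b := by
    simp only [← even_iff_two_dvd, Int.even_sub, Int.even_add]
  have hboth : 2 ∣ a - b ∧ 2 ∣ a + b := by
    rw [hfac] at h
    rcases Int.prime_two.dvd_or_dvd h with h | h
    exacts [⟨h, hpar.mp h⟩, ⟨hpar.mpr h, h⟩]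
  rw [hfac]
  exact mul_dvd_mul hboth.1 hboth.2

theorem four_dvd_of_eq_sq_sub_sq_mul_sq {R : Type*} [CommRing R] {a b D : ℤ} {m : R}
    (hD : (D : R) = ((a ^ 2 - b ^ 2 : ℤ) : R) * m ^ 2) (hm : (2 : R) ∣ m ^ 2 - m) (h2 : 2 ∣ D) :
    (4 : R) ∣ D := by
  by_cases hc : 2 ∣ a ^ 2 - b ^ 2
  · have h4 := map_dvd (Int.castRingHom R) (Int.four_dvd_sq_sub_sq hc)
    rw [hD]
    exact dvd_mul_of_dvd_left (by simpa using h4) _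
  obtain ⟨x, hx⟩ : Odd (a ^ 2 - b ^ 2) := Int.not_even_iff_odd.mp (by rwa [even_iff_two_dvd])
  obtain ⟨d, rfl⟩ := h2
  have hm2 : (2 : R) ∣ m ^ 2 := ⟨d - x * m ^ 2, by push_cast [hx] at hD; linear_combination -hD⟩
  have hm1 : (2 : R) ∣ m := by simpa using dvd_sub hm2 hm
  rw [hD, show (4 : R) = 2 ^ 2 by norm_num]
  exact dvd_mul_of_dvd_right (pow_dvd_pow_of_dvd hm1 2) _

theorem Int.dvd_of_intCast_dvd_integralClosure {K : Type*} [Field K] [CharZero K] {a b : ℤ}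
    (h : (a : integralClosure ℤ K) ∣ b) : a ∣ b := by
  obtain ⟨t, ht⟩ := h
  rcases eq_or_ne a 0 with rfl | ha
  · simpa using ht
  have htK : algebraMap ℚ K (b / a) = t := by
    have := congrArg Subtype.val ht
    push_cast [eq_ratCast] at this ⊢
    rw [this]; field_simp
  obtain ⟨y, hy⟩ := IsIntegrallyClosed.isIntegral_iff.mp <|
    (isIntegral_algebraMap_iff (algebraMap ℚ K).injective).mp (by rw [htK]; exact t.2)
  refine ⟨y, ?_⟩
  have : (b : ℚ) = a * y := by rw [show (y : ℚ) = b / a from hy]; field_simp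
  exact_mod_cast this

theorem prod_range_dihedralFactor_inv {K : Type*} [Field K] (f g : ℤ[X]) {ω : K} {k : ℕ}
    (hω : ω ^ (2 * k + 1) = 1) :
    ∏ j ∈ range (2 * k + 1), dihedralFactor f g (ω ^ j) (ω ^ j)⁻¹ =
      ((f.eval 1 ^ 2 - g.eval 1 ^ 2 : ℤ) : K) * dihedralHalfProd f g ω k ^ 2 := by
  have hω0 : ω ≠ 0 := by rintro rfl; simp at hω
  rw [← prod_range_dihedralFactor f g hω]
  refine prod_congr rfl fun j hj ↦ ?_
  rw [pow_sub₀ _ hω0 (mem_range.mp hj).le, hω, one_mul]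

theorem stmt7_general (n : ℕ) (hn : Odd n) (f g : Polynomial ℤ) (D : ℤ)
    (hD : (∏ j ∈ Finset.range n,
        (Polynomial.aeval ((Complex.exp (2 * Real.pi * Complex.I / n)) ^ j) f *
          Polynomial.aeval (((Complex.exp (2 * Real.pi * Complex.I / n)) ^ j)⁻¹) f -
         Polynomial.aeval ((Complex.exp (2 * Real.pi * Complex.I / n)) ^ j) g *
          Polynomial.aeval (((Complex.exp (2 * Real.pi * Complex.I / n)) ^ j)⁻¹) g)) = (D : ℂ))
    (h2 : 2 ∣ D) : 4 ∣ D := by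
  obtain ⟨k, rfl⟩ := hn
  set ω := Complex.exp (2 * Real.pi * Complex.I / ↑(2 * k + 1))
  have hω : IsPrimitiveRoot ω (2 * k + 1) := Complex.isPrimitiveRoot_exp _ (by omega)
  let ζ : integralClosure ℤ ℂ := ⟨ω, hω.isIntegral (by omega)⟩
  have hζ : ζ ^ (2 * k + 1) = 1 := Subtype.ext (by simpa using hω.pow_eq_one)
  have hDζ : (D : integralClosure ℤ ℂ) =
      ((f.eval 1 ^ 2 - g.eval 1 ^ 2 : ℤ) : integralClosure ℤ ℂ) * dihedralHalfProd f g ζ k ^ 2 := by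
    have hm : ((dihedralHalfProd f g ζ k : integralClosure ℤ ℂ) : ℂ) = dihedralHalfProd f g ω k :=
      map_dihedralHalfProd f g (algebraMap (integralClosure ℤ ℂ) ℂ) ζ k
    have hDω := hD.symm.trans (prod_range_dihedralFactor_inv f g hω.pow_eq_one)
    rw [← hm] at hDω
    exact Subtype.ext (by exact_mod_cast hDω)
  apply Int.dvd_of_intCast_dvd_integralClosure (K := ℂ)
  exact_mod_cast four_dvd_of_eq_sq_sub_sq_mul_sq hDζ (two_dvd_dihedralHalfProd_sq_sub f g hζ)
    (by exact_mod_cast h2)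

/-- For `n` odd and `f, g ∈ ℤ[X]`: if `2` divides the integer dihedral determinant
`D = ∏_{j<n} (f(ω^j) f(ω^{-j}) - g(ω^j) g(ω^{-j}))`, then `4` divides `D`. -/
theorem stmt7 (n : ℕ) (hn : Odd n) (hpos : 0 < n) (f g : Polynomial ℤ) (D : ℤ)
    (hD : (∏ j ∈ Finset.range n,
        (Polynomial.aeval ((Complex.exp (2 * Real.pi * Complex.I / n)) ^ j) f *
          Polynomial.aeval (((Complex.exp (2 * Real.pi * Complex.I / n)) ^ j)⁻¹) f -
         Polynomial.aeval ((Complex.exp (2 * Real.pi * Complex.I / n)) ^ j) g *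
          Polynomial.aeval (((Complex.exp (2 * Real.pi * Complex.I / n)) ^ j)⁻¹) g)) = (D : ℂ))
    (h2 : 2 ∣ D) : 4 ∣ D :=
  stmt7_general n hn f g D hD h2
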